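/- arXiv:2505.22502 — 2 statements merged into one kernel-verified Lean document; each statement's English description precedes it below -/
import Mathlib

section
/- Define the kernel k : ℝ×ℝ → ℝ by k(x,y) = 1 + exp(−x²) if x = y and k(x,y) = 0 otherwise. Then: (i) k is symmetric and positive semi-definite with diagonal bounded by 2; (ii) for any pairwise distinct points x₁,…,x_m ∈ ℝ, the Gram matrix (k(x_i,x_j))_{i,j=1}^m is diagonal with every diagonal entry strictly greater than 1, so its smallest eigenvalue exceeds 1; (iii) if μ is a Borel probability measure on ℝ absolutely continuous with respect to Lebesgue measure, then k = 0 (μ⊗μ)-almost everywhere (so k ∈ L²(μ⊗μ) and the integral operator T_k is the zero operator), yet for i.i.d. μ-distributed X₁, X₂, …, almost surely the smallest eigenvalue λ̃_{m,m} of K_m exceeds 1 for every m, and hence C = lim_{m→∞} λ̃_{m,m} ≥ 1 almost surely. In particular the limit C in the asymptotic condition-number formula need not be 0. -/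
open MeasureTheory Filter Matrix
open scoped Topology ENNReal ProbabilityTheory

/-- The `n`-th largest eigenvalue (0-indexed, counted with multiplicity) of a real
square matrix, defined as the `n`-th entry of the list of roots of its characteristic
polynomial sorted in decreasing order (and `0` if `n` is out of range). -/
noncomputable def nthEig {m : ℕ} (A : Matrix (Fin m) (Fin m) ℝ) (n : ℕ) : ℝ :=
  ((A.charpoly.roots.sort (· ≤ ·)).reverse).getD n 0

/-- The `m × m` Gram matrix of the kernel `k` on the first `m` points of `x`. -/
noncomputable def gram {χ : Type*} (k : χ → χ → ℝ) (x : ℕ → χ) (m : ℕ) :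
    Matrix (Fin m) (Fin m) ℝ :=
  Matrix.of fun i j : Fin m => k (x i) (x j)

/-- The counterexample kernel `k(x,y) = 1 + exp(−x²)` if `x = y` and `0` otherwise. -/
noncomputable def kcex : ℝ → ℝ → ℝ := fun x y =>
  if x = y then 1 + Real.exp (-(x ^ 2)) else 0

/-! The kernel vanishes off the diagonal, which is `(μ ⊗ μ)`-null as soon as `μ` has no atoms, so
`k = 0` almost everywhere. Yet independent samples from an atomless law are almost surely pairwise
distinct, and at distinct points the Gram matrix is diagonal with entries `1 + e^{-x²} > 1`, which
are then its eigenvalues. -/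

section DiagonalKernel

variable {χ : Type*} [DecidableEq χ]

def diagKernel (c : χ → ℝ) (x y : χ) : ℝ :=
  if x = y then c x else 0

lemma kcex_eq_diagKernel : kcex = diagKernel fun x => 1 + Real.exp (-(x ^ 2)) := rfl

lemma diagKernel_comm (c : χ → ℝ) (x y : χ) : diagKernel c x y = diagKernel c y x := by
  by_cases h : x = y
  · rw [h]
  · simp [diagKernel, h, Ne.symm h]

-- The Gram matrix factors as `B * diagonal c * Bᴴ`, with `B` the incidence matrix of the points
-- against the set of values they take.
lemma posSemidef_diagKernel {ι : Type*} [Fintype ι] {c : χ → ℝ} (hc : 0 ≤ c) (x : ι → χ) :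
    (Matrix.of fun i j => diagKernel c (x i) (x j)).PosSemidef := by
  let B : Matrix ι (Set.range x) ℝ := Matrix.of fun i y => if x i = y then 1 else 0
  have hfactor : (Matrix.of fun i j => diagKernel c (x i) (x j)) =
      B * Matrix.diagonal (fun y : Set.range x => c y) * Bᴴ := by
    ext i j
    rw [Matrix.mul_apply]
    simp only [Matrix.mul_diagonal, Matrix.conjTranspose_apply, star_trivial]
    rw [Fintype.sum_eq_single ⟨x i, Set.mem_range_self i⟩]
    · by_cases h : x i = x j <;> simp [B, diagKernel, h, eq_comm]
    · rintro ⟨y, hy⟩ hne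
      have : x i ≠ y := fun h => hne (Subtype.ext h.symm)
      simp [B, this]
  rw [hfactor]
  exact (Matrix.PosSemidef.diagonal (d := fun y : Set.range x => c y) fun y => hc y)
    |>.mul_mul_conjTranspose_same B

lemma diagKernel_gram_eq_diagonal {ι : Type*} [DecidableEq ι] (c : χ → ℝ) {x : ι → χ}
    (hx : Function.Injective x) :
    (Matrix.of fun i j => diagKernel c (x i) (x j)) = Matrix.diagonal (c ∘ x) := by
  ext i j
  simp [diagKernel, Matrix.diagonal_apply, hx.eq_iff]

end DiagonalKernel

lemma nthEig_mem_roots {m : ℕ} (A : Matrix (Fin m) (Fin m) ℝ) {n : ℕ}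
    (hn : n < Multiset.card A.charpoly.roots) : nthEig A n ∈ A.charpoly.roots := by
  have hlen : n < ((A.charpoly.roots.sort (· ≤ ·)).reverse).length := by simpa using hn
  rw [nthEig, List.getD_eq_getElem _ _ hlen]
  simpa only [List.mem_reverse, Multiset.mem_sort] using List.getElem_mem hlen

lemma roots_charpoly_diagonal {n R : Type*} [Fintype n] [DecidableEq n] [CommRing R] [IsDomain R]
    (d : n → R) : (Matrix.diagonal d).charpoly.roots = Finset.univ.val.map d := by
  rw [Matrix.charpoly_diagonal, Finset.prod_eq_multiset_prod,
    ← Polynomial.roots_multiset_prod_X_sub_C (Finset.univ.val.map d), Multiset.map_map]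
  rfl

lemma exists_nthEig_diagonal_eq {m : ℕ} (d : Fin m → ℝ) {n : ℕ} (hn : n < m) :
    ∃ i, nthEig (Matrix.diagonal d) n = d i := by
  have hmem := nthEig_mem_roots (Matrix.diagonal d) (n := n) (by simpa [roots_charpoly_diagonal])
  simpa [roots_charpoly_diagonal, eq_comm] using hmem

lemma kcex_self (x : ℝ) : kcex x x = 1 + Real.exp (-(x ^ 2)) := if_pos rfl

lemma one_lt_kcex_self (x : ℝ) : 1 < kcex x x := by
  simpa [kcex_self] using Real.exp_pos (-(x ^ 2))

lemma kcex_self_le_two (x : ℝ) : kcex x x ≤ 2 := by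
  rw [kcex_self]
  linarith [Real.exp_le_one_iff.mpr (neg_nonpos.mpr (sq_nonneg x))]

lemma one_lt_nthEig_kcex_gram {m : ℕ} {x : Fin m → ℝ} (hx : Function.Injective x) {n : ℕ}
    (hn : n < m) : 1 < nthEig (Matrix.of fun i j => kcex (x i) (x j)) n := by
  rw [kcex_eq_diagKernel, diagKernel_gram_eq_diagonal _ hx]
  obtain ⟨i, hi⟩ := exists_nthEig_diagonal_eq _ hn
  rw [hi, Function.comp_apply, ← kcex_self]
  exact one_lt_kcex_self (x i)

section NullDiagonal

variable {α : Type*} [MeasurableSpace α] [MeasurableEq α]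

lemma measure_prod_diagonal_eq_zero (μ ν : Measure α) [SFinite ν] [NullSingletonClass ν] :
    μ.prod ν (Set.diagonal α) = 0 := by
  rw [Measure.measure_prod_null measurableSet_diagonal]
  refine Eventually.of_forall fun x => ?_
  have hslice : Prod.mk x ⁻¹' Set.diagonal α = {x} := by ext; simp [eq_comm]
  simp [hslice]

lemma diagKernel_ae_eq_zero [DecidableEq α] (c : α → ℝ) (μ ν : Measure α) [SFinite ν]
    [NullSingletonClass ν] : (fun p : α × α => diagKernel c p.1 p.2) =ᵐ[μ.prod ν] 0 := by
  filter_upwards [measure_eq_zero_iff_ae_notMem.1 (measure_prod_diagonal_eq_zero μ ν)] with p hp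
  exact if_neg hp

variable {Ω : Type*} [MeasurableSpace Ω] {P : Measure Ω} [IsFiniteMeasure P]

lemma ae_ne_of_indepFun {f g : Ω → α} (hf : AEMeasurable f P) (hg : AEMeasurable g P)
    (hfg : f ⟂ᵢ[P] g) [NullSingletonClass (P.map g)] : ∀ᵐ ω ∂P, f ω ≠ g ω := by
  have hcoincide : P {ω | f ω = g ω} = 0 := by
    have hdiag := measure_prod_diagonal_eq_zero (P.map f) (P.map g)
    rwa [← (ProbabilityTheory.indepFun_iff_map_prod_eq_prod_map_map hf hg).1 hfg,
      Measure.map_apply_of_aemeasurable (hf.prodMk hg) measurableSet_diagonal] at hdiag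
  exact measure_eq_zero_iff_ae_notMem.1 hcoincide

lemma ae_injective_of_iIndepFun {ι : Type*} [Countable ι] {X : ι → Ω → α}
    (hX : ∀ i, AEMeasurable (X i) P) (hind : ProbabilityTheory.iIndepFun X P)
    (hX_atom : ∀ i, NullSingletonClass (P.map (X i))) :
    ∀ᵐ ω ∂P, Function.Injective fun i => X i ω := by
  have hne : ∀ᵐ ω ∂P, ∀ i j, i ≠ j → X i ω ≠ X j ω := by
    refine ae_all_iff.2 fun i => ae_all_iff.2 fun j => ?_
    by_cases hij : i = j
    · exact .of_forall fun _ h => absurd hij h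
    · filter_upwards [ae_ne_of_indepFun (hX i) (hX j) (hind.indepFun hij)] with ω h _ using h
  filter_upwards [hne] with ω h i j hij
  by_contra hne
  exact h i j hne hij

end NullDiagonal

/-- **Counterexample to `C = 0`.**
The kernel `k(x,y) = (1 + e^{−x²})·1_{x=y}` is symmetric, positive semi-definite with
diagonal bounded by `2`; Gram matrices at pairwise distinct points are diagonal with
diagonal entries `> 1`, hence smallest eigenvalue `> 1`; for `μ` absolutely continuous
with respect to Lebesgue measure, `k = 0` `(μ⊗μ)`-a.e. (so `k ∈ L²(μ⊗μ)`), yet for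
i.i.d. `μ`-distributed data the smallest eigenvalue `λ̃_{m,m}` of `K_m` exceeds `1`
almost surely for every `m ≥ 1`, and hence `C = lim_m λ̃_{m,m} ≥ 1` almost surely. -/
theorem counterexample_C_not_zero
    {Ω : Type*} [MeasureSpace Ω] [IsProbabilityMeasure (ℙ : Measure Ω)]
    (μ : Measure ℝ) [IsProbabilityMeasure μ] (hμ : μ ≪ volume)
    (X : ℕ → Ω → ℝ) (hX_meas : ∀ i, Measurable (X i))
    (hX_indep : ProbabilityTheory.iIndepFun X (ℙ : Measure Ω))
    (hX_law : ∀ i, Measure.map (X i) (ℙ : Measure Ω) = μ) :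
    -- (i) symmetric, positive semi-definite, diagonal bounded by 2
    ((∀ x y, kcex x y = kcex y x) ∧
      (∀ (m : ℕ) (x : Fin m → ℝ),
        (Matrix.of fun i j : Fin m => kcex (x i) (x j)).PosSemidef) ∧
      (∀ x, kcex x x ≤ 2)) ∧
    -- (ii) Gram matrices at pairwise distinct points are diagonal with entries > 1,
    -- so the smallest eigenvalue exceeds 1
    (∀ (m : ℕ) (x : Fin m → ℝ), Function.Injective x →
      (∀ i j : Fin m, i ≠ j → (Matrix.of fun i j : Fin m => kcex (x i) (x j)) i j = 0) ∧
      (∀ i : Fin m, 1 < (Matrix.of fun i j : Fin m => kcex (x i) (x j)) i i) ∧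
      (1 ≤ m → 1 < nthEig (Matrix.of fun i j : Fin m => kcex (x i) (x j)) (m - 1))) ∧
    -- (iii) `k = 0` a.e. for absolutely continuous `μ`, so `k ∈ L²(μ⊗μ)`, …
    ((fun p : ℝ × ℝ => kcex p.1 p.2) =ᵐ[μ.prod μ] 0) ∧
    MemLp (fun p : ℝ × ℝ => kcex p.1 p.2) 2 (μ.prod μ) ∧
    -- … yet almost surely every smallest Gram eigenvalue exceeds 1 …
    (∀ᵐ ω ∂(ℙ : Measure Ω), ∀ m : ℕ, 1 ≤ m →
      1 < nthEig (gram kcex (fun i => X i ω) m) (m - 1)) ∧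
    -- … hence the limit `C` of the smallest eigenvalues is ≥ 1 almost surely
    (∀ C : Ω → ℝ,
      (∀ᵐ ω ∂(ℙ : Measure Ω),
        Tendsto (fun m : ℕ => nthEig (gram kcex (fun i => X i ω) m) (m - 1))
          atTop (𝓝 (C ω))) →
      ∀ᵐ ω ∂(ℙ : Measure Ω), 1 ≤ C ω) := by
  have : NullSingletonClass μ := ⟨fun x => hμ (measure_singleton x)⟩
  have hk_ae : (fun p : ℝ × ℝ => kcex p.1 p.2) =ᵐ[μ.prod μ] 0 := by
    rw [kcex_eq_diagKernel]
    exact diagKernel_ae_eq_zero _ μ μ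
  have hgram : ∀ᵐ ω ∂(ℙ : Measure Ω), ∀ m : ℕ, 1 ≤ m →
      1 < nthEig (gram kcex (fun i => X i ω) m) (m - 1) := by
    filter_upwards [ae_injective_of_iIndepFun (fun i => (hX_meas i).aemeasurable) hX_indep
      fun i => hX_law i ▸ inferInstance] with ω hω m hm
    exact one_lt_nthEig_kcex_gram (x := fun i : Fin m => X i ω) (hω.comp Fin.val_injective)
      (by omega)
  refine ⟨⟨diagKernel_comm _, fun m x => ?_, kcex_self_le_two⟩, fun m x hx => ⟨fun i j hij => ?_,
    fun i => one_lt_kcex_self (x i), fun hm => one_lt_nthEig_kcex_gram hx (by omega)⟩, hk_ae,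
    MemLp.zero.ae_eq hk_ae.symm, hgram, fun C hC => ?_⟩
  · rw [kcex_eq_diagKernel]
    exact posSemidef_diagKernel (fun y => add_nonneg zero_le_one (Real.exp_pos _).le) x
  · rw [kcex_eq_diagKernel, diagKernel_gram_eq_diagonal _ hx]
    exact diagonal_apply_ne _ hij
  · filter_upwards [hC, hgram] with ω hlim hω
    exact ge_of_tendsto hlim (eventually_atTop.2 ⟨1, fun m hm => (hω m hm).le⟩)
end

section
/- Separability of the Gaussian integral eigenproblem: let l > 0, d ∈ ℕ, v ∈ ℝ^d, and let Σ be a real symmetric positive definite d×d matrix with orthogonal diagonalisation Σ = Pᵀ D P where D = diag(ν₁,…,ν_d), ν_i > 0, and P orthogonal. Let p be the density of the N(v, Σ) distribution on ℝ^d and for each i let p_i be the density of N(0, ν_i) on ℝ. Suppose for each i ∈ {1,…,d} the function ψ_i : ℝ → ℝ and scalar μ_i ∈ ℝ satisfy, for all t ∈ ℝ, ∫_ℝ exp(−(s−t)²/(2l²)) ψ_i(s) p_i(s) ds = μ_i ψ_i(t) (with ψ_i · p_i integrable). Then the function Φ(x) = ∏_{i=1}^d ψ_i([P(x−v)]_i)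 satisfies, for all y ∈ ℝ^d, ∫_{ℝ^d} exp(−‖x−y‖²/(2l²)) Φ(x) p(x) dx = (∏_{i=1}^d μ_i) · Φ(y); i.e. Φ is an eigenfunction of the integral operator of the RBF kernel with respect to the N(v, Σ) measure, with eigenvalue ∏_i μ_i. -/
open MeasureTheory Filter Matrix
open scoped Topology Real

/-!
Put `z = P (x - v)`. The affine map `x ↦ P (x - v)` preserves Lebesgue measure and Euclidean
distances, and since `Σ⁻¹ = Pᵀ D⁻¹ P` and `det Σ = ∏ νᵢ` it turns the `N(v, Σ)` density into
`∏ᵢ pᵢ(zᵢ)`. In the variable `z` the integrand is therefore a product of functions of the single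
coordinates `zᵢ`, and Fubini splits the integral into the `d` one-dimensional eigenproblems.
-/

open Finset

namespace Matrix

variable {ι : Type*} [Fintype ι]

theorem dotProduct_conj_diagonal_mulVec {R : Type*} [CommSemiring R] [DecidableEq ι]
    (P : Matrix ι ι R) (w z : ι → R) :
    z ⬝ᵥ ((Pᵀ * diagonal w * P) *ᵥ z) = ∑ i, w i * (P *ᵥ z) i ^ 2 := by
  rw [← mulVec_mulVec, ← mulVec_mulVec, dotProduct_mulVec, vecMul_transpose]
  simp only [dotProduct, mulVec_diagonal]
  exact sum_congr rfl fun i _ => by ring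

variable {K : Type*} [Field K] [DecidableEq ι] {P : Matrix ι ι K}

theorem det_conj_diagonal_of_transpose_mul_self (hP : Pᵀ * P = 1) (ν : ι → K) :
    (Pᵀ * diagonal ν * P).det = ∏ i, ν i := by
  have hdet : P.det * P.det = 1 := by
    simpa only [det_mul, det_transpose, det_one] using congrArg det hP
  rw [det_mul, det_mul, det_transpose, det_diagonal]
  linear_combination (∏ i, ν i) * hdet

theorem inv_conj_diagonal_of_transpose_mul_self (hP : Pᵀ * P = 1) {ν : ι → K}
    (hν : ∀ i, ν i ≠ 0) : (Pᵀ * diagonal ν * P)⁻¹ = Pᵀ * diagonal ν⁻¹ * P := by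
  have hPP : P * Pᵀ = 1 := mul_eq_one_comm.mp hP
  have hD : diagonal ν * diagonal ν⁻¹ = 1 := by
    rw [diagonal_mul_diagonal, ← diagonal_one]
    exact congrArg diagonal (funext fun i => mul_inv_cancel₀ (hν i))
  refine inv_eq_right_inv ?_
  calc Pᵀ * diagonal ν * P * (Pᵀ * diagonal ν⁻¹ * P)
      = Pᵀ * (diagonal ν * (P * Pᵀ) * diagonal ν⁻¹) * P := by simp only [Matrix.mul_assoc]
    _ = 1 := by rw [hPP, Matrix.mul_one, hD, Matrix.mul_one, hP]

section Real

variable {P : Matrix ι ι ℝ}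

theorem abs_det_eq_one_of_transpose_mul_self (hP : Pᵀ * P = 1) : |P.det| = 1 := by
  have hdet : P.det ^ 2 = 1 := by
    simpa only [det_mul, det_transpose, det_one, sq] using congrArg det hP
  rwa [← sq_abs, pow_eq_one_iff_of_nonneg (abs_nonneg _) two_ne_zero] at hdet

theorem measurePreserving_mulVec_of_transpose_mul_self (hP : Pᵀ * P = 1) :
    MeasurePreserving (P *ᵥ ·) (volume : Measure (ι → ℝ)) volume := by
  refine ⟨(toLin' P).continuous_of_finiteDimensional.measurable, ?_⟩
  have := Real.map_matrix_volume_pi_eq_smul_volume_pi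
    (det_ne_zero_of_left_inverse hP)
  rwa [abs_inv, abs_det_eq_one_of_transpose_mul_self hP, inv_one, ENNReal.ofReal_one,
    one_smul] at this

theorem integral_comp_mulVec_of_transpose_mul_self {E : Type*} [NormedAddCommGroup E]
    [NormedSpace ℝ E] (hP : Pᵀ * P = 1) (f : (ι → ℝ) → E) :
    ∫ z, f (P *ᵥ z) = ∫ z, f z := by
  have hinj : Function.Injective (P *ᵥ ·) :=
    mulVec_injective_of_det_ne_zero (det_ne_zero_of_left_inverse hP)
  exact (measurePreserving_mulVec_of_transpose_mul_self hP).integral_comp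
    (LinearMap.isClosedEmbedding_of_injective (f := toLin' P)
      (LinearMap.ker_eq_bot.mpr hinj)).measurableEmbedding f

theorem integral_prod_comp_mulVec_sub {𝕜 : Type*} [RCLike 𝕜] (hP : Pᵀ * P = 1)
    (F : ι → ℝ → 𝕜) (v : ι → ℝ) :
    ∫ x, ∏ i, F i ((P *ᵥ (x - v)) i) = ∏ i, ∫ s, F i s := by
  rw [integral_sub_right_eq_self (fun z => ∏ i, F i ((P *ᵥ z) i)) v,
    integral_comp_mulVec_of_transpose_mul_self hP (fun u => ∏ i, F i (u i)),
    integral_fintype_prod_volume_eq_prod]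

end Real

end Matrix

section GaussianFactorization

variable {ι : Type*} [Fintype ι]

theorem Real.exp_neg_sum_div (a : ι → ℝ) (c : ℝ) :
    Real.exp (-(∑ i, a i) / c) = ∏ i, Real.exp (-a i / c) := by
  rw [← Real.exp_sum, ← sum_neg_distrib, sum_div]

theorem gaussian_normalizer_eq_prod {ν : ι → ℝ} (hν : ∀ i, 0 ≤ ν i) :
    (2 * π) ^ (-(Fintype.card ι : ℝ) / 2) * (∏ i, ν i) ^ (-(1 : ℝ) / 2)
      = ∏ i, (2 * π * ν i) ^ (-(1 : ℝ) / 2) := by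
  have h2π : (0 : ℝ) ≤ 2 * π := by positivity
  have hconst : (2 * π) ^ (-(Fintype.card ι : ℝ) / 2) = ∏ _i : ι, (2 * π) ^ (-(1 : ℝ) / 2) := by
    rw [prod_const, card_univ, ← Real.rpow_natCast, ← Real.rpow_mul h2π]
    ring_nf
  rw [hconst, ← Real.finsetProd_rpow _ _ fun i _ => hν i, ← prod_mul_distrib]
  exact prod_congr rfl fun i _ => (Real.mul_rpow h2π (hν i)).symm

variable [DecidableEq ι] {P : Matrix ι ι ℝ}

theorem gaussian_density_conj_diagonal_eq_prod (hP : Pᵀ * P = 1) {ν : ι → ℝ}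
    (hν : ∀ i, 0 < ν i) (z : ι → ℝ) :
    (2 * π) ^ (-(Fintype.card ι : ℝ) / 2) * (Pᵀ * diagonal ν * P).det ^ (-(1 : ℝ) / 2) *
        Real.exp (-(z ⬝ᵥ ((Pᵀ * diagonal ν * P)⁻¹ *ᵥ z)) / 2)
      = ∏ i, (2 * π * ν i) ^ (-(1 : ℝ) / 2) * Real.exp (-((P *ᵥ z) i ^ 2) / (2 * ν i)) := by
  rw [det_conj_diagonal_of_transpose_mul_self hP,
    gaussian_normalizer_eq_prod fun i => (hν i).le,
    inv_conj_diagonal_of_transpose_mul_self hP fun i => (hν i).ne',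
    dotProduct_conj_diagonal_mulVec, Real.exp_neg_sum_div, ← prod_mul_distrib]
  congr! 3 with i
  simp only [Pi.inv_apply]
  ring

theorem sum_sq_sub_eq_sum_sq_mulVec_sub (hP : Pᵀ * P = 1) (x y v : ι → ℝ) :
    ∑ i, (x i - y i) ^ 2 = ∑ i, ((P *ᵥ (x - v)) i - (P *ᵥ (y - v)) i) ^ 2 := by
  have := dotProduct_conj_diagonal_mulVec P (fun _ => 1) (x - y)
  rw [diagonal_one, Matrix.mul_one, hP, one_mulVec] at this
  simp only [dotProduct, Pi.sub_apply, one_mul, ← sq] at this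
  rw [this, ← sub_sub_sub_cancel_right x y v, mulVec_sub]
  rfl

end GaussianFactorization

theorem gaussian_rbf_eigenproblem_separable_general
    (d : ℕ) (l : ℝ)
    (v : Fin d → ℝ)
    (S : Matrix (Fin d) (Fin d) ℝ)
    (P : Matrix (Fin d) (Fin d) ℝ) (hP : Pᵀ * P = 1)
    (ν : Fin d → ℝ) (hν : ∀ i, 0 < ν i)
    (hS_diag : S = Pᵀ * Matrix.diagonal ν * P)
    -- the density of the `N(v, Σ)` distribution on `ℝ^d`
    (p : (Fin d → ℝ) → ℝ)
    (hp : p = fun x => (2 * π) ^ (-(d : ℝ) / 2) * S.det ^ (-(1 : ℝ) / 2) *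
      Real.exp (-(dotProduct (x - v) (S⁻¹.mulVec (x - v))) / 2))
    -- the densities of the `N(0, νᵢ)` distributions on `ℝ`
    (p₁ : Fin d → ℝ → ℝ)
    (hp₁ : ∀ i, p₁ i = fun s =>
      (2 * π * ν i) ^ (-(1 : ℝ) / 2) * Real.exp (-(s ^ 2) / (2 * ν i)))
    (ψ : Fin d → ℝ → ℝ) (μ : Fin d → ℝ)
    -- each `ψᵢ` solves the one-dimensional eigenproblem with eigenvalue `μᵢ`
    (h_eig : ∀ i, ∀ t : ℝ,
      ∫ s : ℝ, Real.exp (-(s - t) ^ 2 / (2 * l ^ 2)) * ψ i s * p₁ i s = μ i * ψ i t) :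
    ∀ y : Fin d → ℝ,
      ∫ x : Fin d → ℝ,
          Real.exp (-(∑ i, (x i - y i) ^ 2) / (2 * l ^ 2)) *
            (∏ i, ψ i (P.mulVec (x - v) i)) * p x
        = (∏ i, μ i) * ∏ i, ψ i (P.mulVec (y - v) i) := by
  intro y
  subst hS_diag hp
  have hfactor : ∀ x : Fin d → ℝ,
      Real.exp (-(∑ i, (x i - y i) ^ 2) / (2 * l ^ 2)) *
          (∏ i, ψ i ((P *ᵥ (x - v)) i)) *
          ((2 * π) ^ (-(d : ℝ) / 2) * (Pᵀ * diagonal ν * P).det ^ (-(1 : ℝ) / 2) *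
            Real.exp (-((x - v) ⬝ᵥ ((Pᵀ * diagonal ν * P)⁻¹ *ᵥ (x - v))) / 2))
        = ∏ i, Real.exp (-((P *ᵥ (x - v)) i - (P *ᵥ (y - v)) i) ^ 2 / (2 * l ^ 2)) *
            ψ i ((P *ᵥ (x - v)) i) * p₁ i ((P *ᵥ (x - v)) i) := by
    intro x
    have hdensity := gaussian_density_conj_diagonal_eq_prod hP hν (x - v)
    rw [Fintype.card_fin] at hdensity
    rw [sum_sq_sub_eq_sum_sq_mulVec_sub hP x y v, Real.exp_neg_sum_div, hdensity]
    simp only [hp₁, ← prod_mul_distrib]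
  simp only [hfactor]
  rw [integral_prod_comp_mulVec_sub hP
      (fun i s => Real.exp (-(s - (P *ᵥ (y - v)) i) ^ 2 / (2 * l ^ 2)) * ψ i s * p₁ i s),
    ← prod_mul_distrib]
  exact prod_congr rfl fun i _ => h_eig i _

/-- **Separability of the Gaussian integral eigenproblem.**
If each `ψᵢ` is an eigenfunction (with eigenvalue `μᵢ`) of the one-dimensional RBF
integral operator with respect to the `N(0, νᵢ)` density, then
`Φ(x) = ∏ᵢ ψᵢ([P(x−v)]ᵢ)` is an eigenfunction of the `d`-dimensional RBF integral
operator with respect to the `N(v, Σ)` density, with eigenvalue `∏ᵢ μᵢ`. -/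
theorem gaussian_rbf_eigenproblem_separable
    (d : ℕ) (l : ℝ) (hl : 0 < l)
    (v : Fin d → ℝ)
    (S : Matrix (Fin d) (Fin d) ℝ) (hS_symm : S.IsSymm) (hS_pd : S.PosDef)
    (P : Matrix (Fin d) (Fin d) ℝ) (hP : Pᵀ * P = 1)
    (ν : Fin d → ℝ) (hν : ∀ i, 0 < ν i)
    (hS_diag : S = Pᵀ * Matrix.diagonal ν * P)
    -- the density of the `N(v, Σ)` distribution on `ℝ^d`
    (p : (Fin d → ℝ) → ℝ)
    (hp : p = fun x => (2 * π) ^ (-(d : ℝ) / 2) * S.det ^ (-(1 : ℝ) / 2) *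
      Real.exp (-(dotProduct (x - v) (S⁻¹.mulVec (x - v))) / 2))
    -- the densities of the `N(0, νᵢ)` distributions on `ℝ`
    (p₁ : Fin d → ℝ → ℝ)
    (hp₁ : ∀ i, p₁ i = fun s =>
      (2 * π * ν i) ^ (-(1 : ℝ) / 2) * Real.exp (-(s ^ 2) / (2 * ν i)))
    (ψ : Fin d → ℝ → ℝ) (μ : Fin d → ℝ)
    (h_int : ∀ i, Integrable (fun s => ψ i s * p₁ i s))
    -- each `ψᵢ` solves the one-dimensional eigenproblem with eigenvalue `μᵢ`
    (h_eig : ∀ i, ∀ t : ℝ,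
      ∫ s : ℝ, Real.exp (-(s - t) ^ 2 / (2 * l ^ 2)) * ψ i s * p₁ i s = μ i * ψ i t) :
    ∀ y : Fin d → ℝ,
      ∫ x : Fin d → ℝ,
          Real.exp (-(∑ i, (x i - y i) ^ 2) / (2 * l ^ 2)) *
            (∏ i, ψ i (P.mulVec (x - v) i)) * p x
        = (∏ i, μ i) * ∏ i, ψ i (P.mulVec (y - v) i) :=
  gaussian_rbf_eigenproblem_separable_general d l v S P hP ν hν hS_diag p hp p₁ hp₁ ψ μ h_eig
end
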